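/- arXiv:2403.19719 — 6 statements merged into one kernel-verified Lean document; each statement's English description precedes it below -/
import Mathlib

section
/- Let μ be a probability measure on the real line. There exists a unique positive, locally finite Borel measure λ on ℝ × ℝ such that for all functions u, v : ℝ → ℝ having C^∞-smooth, compactly supported derivatives, cov_μ(u,v) = ∫∫ u'(x) v'(y) dλ(x,y); moreover this measure λ is the Höffding measure λ_μ, i.e. the measure on ℝ × ℝ that is absolutely continuous with respect to Lebesgue measure with density H_μ(x,y) = F(min(x,y))·(1 − F(max(x,y))). -/
/-!
Write `u t = c + ∫_{(-∞, t)} u'` and `v t = d + ∫_{(-∞, t)} v'`. By Fubini, `cov_μ(u, v)` becomes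
`∫∫ u'(x) v'(y) cov_μ(1_{(x, ∞)}, 1_{(y, ∞)}) dx dy`, and the covariance of these two indicators is
`μ(max x y, ∞) - μ(x, ∞) μ(y, ∞) = H_μ(x, y)`.

For uniqueness, products `f(x) g(y)` of smooth bumps converge boundedly to the indicator of an open
box, so two locally finite measures representing the covariance agree on boxes with rational
corners; these form a π-system generating the Borel σ-algebra of `ℝ × ℝ`.
-/

open MeasureTheory ProbabilityTheory Filter Set
open scoped ENNReal NNReal

noncomputable section

/-- The distribution function of `μ`: `F x = μ (-∞, x]`. -/
def distF (μ : MeasureTheory.Measure ℝ) (x : ℝ) : ℝ := (μ (Set.Iic x)).toReal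

/-- The Höffding kernel of `μ`: `H (x, y) = F (min x y) * (1 - F (max x y))`. -/
def hoeffdingKernel (μ : MeasureTheory.Measure ℝ) (x y : ℝ) : ℝ :=
  distF μ (min x y) * (1 - distF μ (max x y))

/-- The Höffding measure of `μ`: the measure on `ℝ × ℝ` with density `H_μ`
with respect to two-dimensional Lebesgue measure. -/
def hoeffdingMeasure (μ : MeasureTheory.Measure ℝ) : MeasureTheory.Measure (ℝ × ℝ) :=
  (MeasureTheory.volume : MeasureTheory.Measure (ℝ × ℝ)).withDensity
    fun p => ENNReal.ofReal (hoeffdingKernel μ p.1 p.2)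

/-- The covariance of `u` and `v` under `μ`. -/
def covFn (μ : MeasureTheory.Measure ℝ) (u v : ℝ → ℝ) : ℝ :=
  (∫ x, u x * v x ∂μ) - (∫ x, u x ∂μ) * (∫ x, v x ∂μ)

open Topology

section Primitive

variable {f : ℝ → ℝ}

lemma integral_Iio_eq_add_intervalIntegral (hf : Integrable f) (t : ℝ) :
    ∫ x in Iio t, f x = (∫ x in Iio 0, f x) + ∫ x in (0 : ℝ)..t, f x := by
  rw [← integral_Iic_eq_integral_Iio, ← integral_Iic_eq_integral_Iio,
    ← intervalIntegral.integral_Iic_sub_Iic hf.integrableOn hf.integrableOn]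
  ring

lemma continuous_integral_Iio (hf : Integrable f) : Continuous fun t => ∫ x in Iio t, f x := by
  rw [funext (integral_Iio_eq_add_intervalIntegral hf)]
  exact continuous_const.add
    (intervalIntegral.continuous_primitive (fun _ _ => hf.intervalIntegrable) 0)

lemma hasDerivAt_integral_Iio (hf : Integrable f) (hfc : Continuous f) (t : ℝ) :
    HasDerivAt (fun s => ∫ x in Iio s, f x) (f t) t := by
  rw [funext (integral_Iio_eq_add_intervalIntegral hf)]
  exact (hfc.integral_hasStrictDerivAt 0 t).hasDerivAt.const_add _

lemma norm_integral_Iio_le (hf : Integrable f) (t : ℝ) : ‖∫ x in Iio t, f x‖ ≤ ∫ x, ‖f x‖ :=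
  (norm_integral_le_integral_norm _).trans
    (setIntegral_le_integral hf.norm (ae_of_all _ fun _ => norm_nonneg _))

lemma memLp_integral_Iio (hf : Integrable f) (p : ℝ≥0∞) (μ : Measure ℝ) [IsFiniteMeasure μ] :
    MemLp (fun t => ∫ x in Iio t, f x) p μ :=
  MemLp.of_bound (continuous_integral_Iio hf).aestronglyMeasurable _
    (ae_of_all _ fun t => norm_integral_Iio_le hf t)

lemma exists_eq_const_add_integral_Iio_deriv {u : ℝ → ℝ} (hu : Differentiable ℝ u)
    (hu' : Continuous (deriv u)) (hu'i : Integrable (deriv u)) :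
    ∃ c, ∀ t, u t = c + ∫ x in Iio t, deriv u x := by
  have hderiv : ∀ t, HasDerivAt (fun s => u s - ∫ x in Iio s, deriv u x) 0 t := fun t => by
    have h := (hu t).hasDerivAt.fun_sub (hasDerivAt_integral_Iio hu'i hu' t)
    rwa [sub_self] at h
  refine ⟨u 0 - ∫ x in Iio 0, deriv u x, fun t => ?_⟩
  have := is_const_of_deriv_eq_zero (fun t => (hderiv t).differentiableAt)
    (fun t => (hderiv t).deriv) t 0
  linarith

end Primitive

theorem integral_integral_Iio_mul {μ ν : Measure ℝ} [SFinite μ] [SFinite ν] {f φ : ℝ → ℝ}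
    (hf : Integrable f ν) (hφ : Integrable φ μ) :
    ∫ t, (∫ x in Iio t, f x ∂ν) * φ t ∂μ = ∫ x, f x * ∫ t in Ioi x, φ t ∂μ ∂ν := by
  have hint : Integrable (Function.uncurry fun t x => (Iio t).indicator (fun x => φ t * f x) x)
      (μ.prod ν) :=
    (hφ.mul_prod hf).indicator (measurableSet_lt measurable_snd measurable_fst)
  calc ∫ t, (∫ x in Iio t, f x ∂ν) * φ t ∂μ
      = ∫ t, ∫ x, (Iio t).indicator (fun x => φ t * f x) x ∂ν ∂μ := by
        simp_rw [integral_indicator measurableSet_Iio, integral_const_mul, mul_comm]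
    _ = ∫ x, ∫ t, (Iio t).indicator (fun x => φ t * f x) x ∂μ ∂ν := integral_integral_swap hint
    _ = ∫ x, f x * ∫ t in Ioi x, φ t ∂μ ∂ν := by
        simp_rw [← integral_const_mul, ← integral_indicator measurableSet_Ioi]
        refine integral_congr_ae (ae_of_all _ fun x => integral_congr_ae (ae_of_all _ fun t => ?_))
        by_cases h : x < t <;> simp [indicator, h, mul_comm]

section Hoeffding

variable (μ : Measure ℝ) [IsProbabilityMeasure μ]

lemma measureReal_Ioi_eq_one_sub_distF (x : ℝ) : μ.real (Ioi x) = 1 - distF μ x := by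
  rw [← compl_Iic, probReal_compl_eq_one_sub measurableSet_Iic]
  rfl

lemma hoeffdingKernel_eq_measureReal_Ioi (x y : ℝ) :
    hoeffdingKernel μ x y = μ.real (Ioi (max x y)) - μ.real (Ioi x) * μ.real (Ioi y) := by
  simp only [hoeffdingKernel, measureReal_Ioi_eq_one_sub_distF]
  rcases le_total x y with h | h
  · simp only [min_eq_left h, max_eq_right h]; ring
  · simp only [min_eq_right h, max_eq_left h]; ring

lemma hoeffdingKernel_nonneg (x y : ℝ) : 0 ≤ hoeffdingKernel μ x y :=
  mul_nonneg measureReal_nonneg (sub_nonneg.2 measureReal_le_one)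

lemma hoeffdingKernel_le_one (x y : ℝ) : hoeffdingKernel μ x y ≤ 1 :=
  mul_le_one₀ measureReal_le_one (sub_nonneg.2 measureReal_le_one)
    (sub_le_self _ measureReal_nonneg)

lemma measurable_hoeffdingKernel : Measurable fun p : ℝ × ℝ => hoeffdingKernel μ p.1 p.2 := by
  have hF : Measurable (distF μ) :=
    Monotone.measurable fun _ _ h => measureReal_mono (Iic_subset_Iic.2 h)
  exact (hF.comp (measurable_fst.min measurable_snd)).mul
    (measurable_const.sub (hF.comp (measurable_fst.max measurable_snd)))

lemma hoeffdingMeasure_le_volume : hoeffdingMeasure μ ≤ volume := by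
  conv_rhs => rw [← withDensity_one (μ := volume)]
  exact withDensity_mono (ae_of_all _ fun p =>
    ENNReal.ofReal_le_one.2 (hoeffdingKernel_le_one μ p.1 p.2))

instance isLocallyFiniteMeasure_hoeffdingMeasure : IsLocallyFiniteMeasure (hoeffdingMeasure μ) :=
  Measure.isLocallyFiniteMeasure_of_le (hoeffdingMeasure_le_volume μ)

lemma integral_hoeffdingMeasure (F : ℝ × ℝ → ℝ) :
    ∫ p, F p ∂hoeffdingMeasure μ = ∫ p, hoeffdingKernel μ p.1 p.2 * F p := by
  rw [hoeffdingMeasure, integral_withDensity_eq_integral_toReal_smul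
    (measurable_hoeffdingKernel μ).ennreal_ofReal (ae_of_all _ fun _ => ENNReal.ofReal_lt_top)]
  simp_rw [ENNReal.toReal_ofReal (hoeffdingKernel_nonneg μ _ _), smul_eq_mul]

theorem covariance_integral_Iio_eq_integral_hoeffdingMeasure {f g : ℝ → ℝ} (hf : Integrable f)
    (hg : Integrable g) :
    cov[fun t => ∫ x in Iio t, f x, fun t => ∫ y in Iio t, g y; μ]
      = ∫ p, f p.1 * g p.2 ∂hoeffdingMeasure μ := by
  set G : ℝ → ℝ := fun x => μ.real (Ioi x) with hG_def
  have hG : Measurable G := Antitone.measurable fun _ _ h => measureReal_mono (Ioi_subset_Ioi h)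
  have hG_le : ∀ x, ‖G x‖ ≤ 1 := fun x => by
    rw [Real.norm_of_nonneg measureReal_nonneg]; exact measureReal_le_one
  have hmean : ∀ {h : ℝ → ℝ}, Integrable h → μ[fun t => ∫ x in Iio t, h x] = ∫ x, h x * G x :=
    fun hh => by simpa using integral_integral_Iio_mul hh (integrable_const (1 : ℝ) (μ := μ))
  have hinner : ∀ x, ∫ t in Ioi x, (∫ y in Iio t, g y) ∂μ = ∫ y, g y * G (max x y) := fun x => by
    simpa [measureReal_restrict_apply measurableSet_Ioi, Ioi_inter_Ioi, max_comm] using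
      integral_integral_Iio_mul hg (integrable_const (1 : ℝ) (μ := μ.restrict (Ioi x)))
  have hP : Integrable fun p : ℝ × ℝ => f p.1 * g p.2 * G (max p.1 p.2) :=
    (hf.mul_prod hg).mul_bdd (hG.comp (measurable_fst.max measurable_snd)).aestronglyMeasurable
      (ae_of_all _ fun _ => hG_le _)
  have hQ : Integrable fun p : ℝ × ℝ => f p.1 * G p.1 * (g p.2 * G p.2) :=
    (hf.mul_bdd hG.aestronglyMeasurable (ae_of_all _ hG_le)).mul_prod
      (hg.mul_bdd hG.aestronglyMeasurable (ae_of_all _ hG_le))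
  rw [covariance_eq_sub (memLp_integral_Iio hf 2 μ) (memLp_integral_Iio hg 2 μ), hmean hf,
    hmean hg, integral_hoeffdingMeasure]
  calc ∫ t, (∫ x in Iio t, f x) * (∫ y in Iio t, g y) ∂μ - (∫ x, f x * G x) * ∫ y, g y * G y
      = (∫ x, f x * ∫ y, g y * G (max x y)) - (∫ x, f x * G x) * ∫ y, g y * G y := by
        simp_rw [integral_integral_Iio_mul hf ((memLp_integral_Iio hg 1 μ).integrable le_rfl),
          hinner]
    _ = (∫ p : ℝ × ℝ, f p.1 * g p.2 * G (max p.1 p.2))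
          - ∫ p : ℝ × ℝ, f p.1 * G p.1 * (g p.2 * G p.2) := by
        rw [Measure.volume_eq_prod, integral_prod _ hP,
          integral_prod_mul (fun x => f x * G x) (fun y => g y * G y)]
        simp_rw [mul_assoc, integral_const_mul]
    _ = ∫ p : ℝ × ℝ, hoeffdingKernel μ p.1 p.2 * (f p.1 * g p.2) := by
        rw [← integral_sub hP hQ]
        simp_rw [hoeffdingKernel_eq_measureReal_Ioi, hG_def]
        congr 1; ext p; ring

end Hoeffding

theorem exists_seq_contDiff_tendsto_indicator_ball {E : Type*} [NormedAddCommGroup E]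
    [NormedSpace ℝ E] [FiniteDimensional ℝ E] (c : E) {r : ℝ} (hr : 0 < r) :
    ∃ φ : ℕ → E → ℝ, (∀ n, ContDiff ℝ (⊤ : ℕ∞) (φ n) ∧ HasCompactSupport (φ n) ∧
      ∀ x, ‖φ n x‖ ≤ (Metric.ball c r).indicator 1 x) ∧
      ∀ x, Tendsto (fun n => φ n x) atTop (𝓝 ((Metric.ball c r).indicator 1 x)) := by
  obtain ⟨ρ, -, hρ_mem, hρ_lim⟩ := exists_seq_strictMono_tendsto' hr
  let φ : ℕ → ContDiffBump c := fun n => ⟨ρ n, r, (hρ_mem n).1, (hρ_mem n).2⟩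
  refine ⟨fun n => φ n, fun n => ⟨(φ n).contDiff, (φ n).hasCompactSupport, fun x => ?_⟩,
    fun x => ?_⟩
  · dsimp only
    by_cases hx : x ∈ Metric.ball c r
    · rw [indicator_of_mem hx, Pi.one_apply, Real.norm_of_nonneg (φ n).nonneg]
      exact (φ n).le_one
    · rw [indicator_of_notMem hx, (φ n).zero_of_le_dist (not_lt.1 hx), norm_zero]
  · dsimp only
    by_cases hx : x ∈ Metric.ball c r
    · rw [indicator_of_mem hx, Pi.one_apply]
      refine tendsto_const_nhds.congr' ?_
      filter_upwards [(tendsto_order.1 hρ_lim).1 _ hx] with n hn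
      exact ((φ n).one_of_mem_closedBall hn.le).symm
    · rw [indicator_of_notMem hx]
      exact tendsto_const_nhds.congr fun n => ((φ n).zero_of_le_dist (not_lt.1 hx)).symm

theorem tendsto_integral_mul_prod_measureReal {α β : Type*} [MeasurableSpace α]
    [MeasurableSpace β] {ν : Measure (α × β)} {s : Set α} {t : Set β} (hs : MeasurableSet s)
    (ht : MeasurableSet t) (hst : ν (s ×ˢ t) ≠ ∞) {φ : ℕ → α → ℝ} {ψ : ℕ → β → ℝ}
    (hφm : ∀ n, Measurable (φ n)) (hψm : ∀ n, Measurable (ψ n))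
    (hφ : ∀ n x, ‖φ n x‖ ≤ s.indicator 1 x) (hψ : ∀ n y, ‖ψ n y‖ ≤ t.indicator 1 y)
    (hφ_lim : ∀ x, Tendsto (fun n => φ n x) atTop (𝓝 (s.indicator 1 x)))
    (hψ_lim : ∀ y, Tendsto (fun n => ψ n y) atTop (𝓝 (t.indicator 1 y))) :
    Tendsto (fun n => ∫ p, φ n p.1 * ψ n p.2 ∂ν) atTop (𝓝 (ν.real (s ×ˢ t))) := by
  rw [← integral_indicator_one (hs.prod ht)]
  refine tendsto_integral_of_dominated_convergence ((s ×ˢ t).indicator 1)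
    (fun n => ((hφm n).comp measurable_fst).mul ((hψm n).comp measurable_snd)
      |>.aestronglyMeasurable)
    ((integrableOn_const hst).integrable_indicator (hs.prod ht))
    (fun n => ae_of_all _ fun p => ?_) (ae_of_all _ fun p => ?_)
  · rw [norm_mul, ← Prod.mk.eta (p := p), indicator_prod_one]
    exact mul_le_mul (hφ n p.1) (hψ n p.2) (norm_nonneg _) (indicator_nonneg (by simp) _)
  · rw [← Prod.mk.eta (p := p), indicator_prod_one]
    exact (hφ_lim p.1).mul (hψ_lim p.2)

theorem measure_ball_prod_ball_eq_of_integral_mul_prod_eq {E F : Type*} [NormedAddCommGroup E]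
    [NormedSpace ℝ E] [FiniteDimensional ℝ E] [MeasurableSpace E] [BorelSpace E]
    [NormedAddCommGroup F] [NormedSpace ℝ F] [FiniteDimensional ℝ F] [MeasurableSpace F]
    [BorelSpace F] {ν ν' : Measure (E × F)} [IsLocallyFiniteMeasure ν] [IsLocallyFiniteMeasure ν']
    (h : ∀ (f : E → ℝ) (g : F → ℝ), ContDiff ℝ (⊤ : ℕ∞) f → HasCompactSupport f →
      ContDiff ℝ (⊤ : ℕ∞) g → HasCompactSupport g →
      ∫ p, f p.1 * g p.2 ∂ν = ∫ p, f p.1 * g p.2 ∂ν')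
    (a : E) (b : F) {r s : ℝ} (hr : 0 < r) (hs : 0 < s) :
    ν (Metric.ball a r ×ˢ Metric.ball b s) = ν' (Metric.ball a r ×ˢ Metric.ball b s) := by
  obtain ⟨φ, hφ, hφ_lim⟩ := exists_seq_contDiff_tendsto_indicator_ball a hr
  obtain ⟨ψ, hψ, hψ_lim⟩ := exists_seq_contDiff_tendsto_indicator_ball b hs
  have hbdd :=
    (Metric.isBounded_ball (x := a) (r := r)).prod (Metric.isBounded_ball (x := b) (r := s))
  have hlim : ∀ (ρ : Measure (E × F)) [IsLocallyFiniteMeasure ρ],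
      Tendsto (fun n => ∫ p, φ n p.1 * ψ n p.2 ∂ρ) atTop
        (𝓝 (ρ.real (Metric.ball a r ×ˢ Metric.ball b s))) := fun ρ _ =>
    tendsto_integral_mul_prod_measureReal measurableSet_ball measurableSet_ball
      (hbdd.measure_lt_top).ne (fun n => (hφ n).1.continuous.measurable)
      (fun n => (hψ n).1.continuous.measurable) (fun n => (hφ n).2.2) (fun n => (hψ n).2.2)
      hφ_lim hψ_lim
  have hreal := tendsto_nhds_unique (hlim ν) <| (hlim ν').congr fun n =>
    (h _ _ (hφ n).1 (hφ n).2.1 (hψ n).1 (hψ n).2.1).symm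
  exact (ENNReal.toReal_eq_toReal_iff' hbdd.measure_lt_top.ne hbdd.measure_lt_top.ne).1 hreal

theorem MeasureTheory.Measure.ext_of_integral_mul_prod_eq {ν ν' : Measure (ℝ × ℝ)}
    [IsLocallyFiniteMeasure ν] [IsLocallyFiniteMeasure ν']
    (h : ∀ f g : ℝ → ℝ, ContDiff ℝ (⊤ : ℕ∞) f → HasCompactSupport f →
      ContDiff ℝ (⊤ : ℕ∞) g → HasCompactSupport g →
      ∫ p, f p.1 * g p.2 ∂ν = ∫ p, f p.1 * g p.2 ∂ν') :
    ν = ν' := by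
  let S : Set (Set ℝ) := ⋃ (a : ℚ) (b : ℚ) (_ : a < b), {Ioo (a : ℝ) b}
  let I := Real.finiteSpanningSetsInIooRat volume
  refine Measure.ext_of_generateFrom_of_iUnion (image2 (· ×ˢ ·) S S) (fun n => I.set n ×ˢ I.set n)
    (BorelSpace.measurable_eq.trans
      (Real.isTopologicalBasis_Ioo_rat.prod Real.isTopologicalBasis_Ioo_rat).borel_eq_generateFrom)
    (Real.isPiSystem_Ioo_rat.prod Real.isPiSystem_Ioo_rat) ?_
    (fun n => mem_image2_of_mem (I.set_mem n) (I.set_mem n))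
    (fun n => (Metric.isBounded_Ioo _ _ |>.prod (Metric.isBounded_Ioo _ _)).measure_lt_top.ne) ?_
  · refine eq_univ_of_forall fun p => mem_iUnion.2 ?_
    obtain ⟨n, hn⟩ := exists_nat_gt (max |p.1| |p.2|)
    have h1 := abs_lt.1 ((le_max_left _ _).trans_lt (hn.trans (lt_add_one (n : ℝ))))
    have h2 := abs_lt.1 ((le_max_right _ _).trans_lt (hn.trans (lt_add_one (n : ℝ))))
    exact ⟨n, ⟨h1.1, h1.2⟩, ⟨h2.1, h2.2⟩⟩
  · rintro _ ⟨_, hs, _, ht, rfl⟩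
    simp only [S, mem_iUnion, mem_singleton_iff] at hs ht
    obtain ⟨a, b, hab, rfl⟩ := hs
    obtain ⟨c, d, hcd, rfl⟩ := ht
    rw [Real.Ioo_eq_ball, Real.Ioo_eq_ball]
    exact measure_ball_prod_ball_eq_of_integral_mul_prod_eq h _ _
      (by simpa using (Rat.cast_lt (K := ℝ)).2 hab) (by simpa using (Rat.cast_lt (K := ℝ)).2 hcd)

section Representation

variable (μ : Measure ℝ)

def RepresentsCovariance (ν : Measure (ℝ × ℝ)) : Prop :=
  ∀ u v : ℝ → ℝ, Differentiable ℝ u → Differentiable ℝ v →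
    ContDiff ℝ (⊤ : ℕ∞) (deriv u) → ContDiff ℝ (⊤ : ℕ∞) (deriv v) →
    HasCompactSupport (deriv u) → HasCompactSupport (deriv v) →
    covFn μ u v = ∫ p : ℝ × ℝ, deriv u p.1 * deriv v p.2 ∂ν

lemma covFn_const_add [IsProbabilityMeasure μ] {U V : ℝ → ℝ} (hU : MemLp U 2 μ)
    (hV : MemLp V 2 μ) (c d : ℝ) :
    covFn μ (fun t => c + U t) (fun t => d + V t) = cov[U, V; μ] := by
  rw [← covariance_const_add_left (hU.integrable one_le_two) c,
    ← covariance_const_add_right (hV.integrable one_le_two) d]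
  exact (covariance_eq_sub ((memLp_const c).add hU) ((memLp_const d).add hV)).symm

theorem representsCovariance_hoeffdingMeasure [IsProbabilityMeasure μ] :
    RepresentsCovariance μ (hoeffdingMeasure μ) := by
  intro u v hu hv hu' hv' hu's hv's
  have hu'i := hu'.continuous.integrable_of_hasCompactSupport (μ := volume) hu's
  have hv'i := hv'.continuous.integrable_of_hasCompactSupport (μ := volume) hv's
  obtain ⟨c, hc⟩ := exists_eq_const_add_integral_Iio_deriv hu hu'.continuous hu'i
  obtain ⟨d, hd⟩ := exists_eq_const_add_integral_Iio_deriv hv hv'.continuous hv'i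
  calc covFn μ u v
      = covFn μ (fun t => c + ∫ x in Iio t, deriv u x) (fun t => d + ∫ y in Iio t, deriv v y) :=
        congr_arg₂ (covFn μ) (funext hc) (funext hd)
    _ = cov[fun t => ∫ x in Iio t, deriv u x, fun t => ∫ y in Iio t, deriv v y; μ] :=
        covFn_const_add μ (memLp_integral_Iio hu'i 2 μ) (memLp_integral_Iio hv'i 2 μ) c d
    _ = _ := covariance_integral_Iio_eq_integral_hoeffdingMeasure μ hu'i hv'i

variable {μ}

lemma RepresentsCovariance.integral_mul_prod_eq {ν : Measure (ℝ × ℝ)}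
    (hν : RepresentsCovariance μ ν) {f g : ℝ → ℝ} (hf : ContDiff ℝ (⊤ : ℕ∞) f)
    (hfs : HasCompactSupport f) (hg : ContDiff ℝ (⊤ : ℕ∞) g) (hgs : HasCompactSupport g) :
    ∫ p, f p.1 * g p.2 ∂ν = covFn μ (fun t => ∫ x in Iio t, f x) (fun t => ∫ y in Iio t, g y) := by
  have hfi := hf.continuous.integrable_of_hasCompactSupport (μ := volume) hfs
  have hgi := hg.continuous.integrable_of_hasCompactSupport (μ := volume) hgs
  have hF := hasDerivAt_integral_Iio hfi hf.continuous
  have hG := hasDerivAt_integral_Iio hgi hg.continuous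
  have hF' : deriv (fun t => ∫ x in Iio t, f x) = f := funext fun t => (hF t).deriv
  have hG' : deriv (fun t => ∫ y in Iio t, g y) = g := funext fun t => (hG t).deriv
  have := hν _ _ (fun t => (hF t).differentiableAt) (fun t => (hG t).differentiableAt)
    (by rwa [hF']) (by rwa [hG']) (by rwa [hF']) (by rwa [hG'])
  rw [hF', hG'] at this
  exact this.symm

theorem RepresentsCovariance.unique {ν ν' : Measure (ℝ × ℝ)} [IsLocallyFiniteMeasure ν]
    [IsLocallyFiniteMeasure ν'] (hν : RepresentsCovariance μ ν) (hν' : RepresentsCovariance μ ν') :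
    ν = ν' :=
  Measure.ext_of_integral_mul_prod_eq fun _ _ hf hfs hg hgs =>
    (hν.integral_mul_prod_eq hf hfs hg hgs).trans (hν'.integral_mul_prod_eq hf hfs hg hgs).symm

end Representation

/-- **Generalized Höffding formula (Theorem 1.1, uniqueness part).**
Given a probability measure `μ` on the real line, there is a unique positive, locally finite
Borel measure `λ` on `ℝ × ℝ` such that `cov_μ(u,v) = ∫∫ u'(x) v'(y) dλ(x,y)` for all functions
`u, v` having `C^∞`-smooth compactly supported derivatives; moreover, this measure is the
Höffding measure `λ_μ`, i.e. the measure with density `H_μ(x,y) = F(x ∧ y)(1 - F(x ∨ y))`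
with respect to Lebesgue measure on the plane. -/
theorem hoeffdingMeasure_unique_covariance_representation
    (μ : Measure ℝ) [IsProbabilityMeasure μ] :
    (IsLocallyFiniteMeasure (hoeffdingMeasure μ) ∧
      (∀ u v : ℝ → ℝ, Differentiable ℝ u → Differentiable ℝ v →
        ContDiff ℝ (⊤ : ℕ∞) (deriv u) → ContDiff ℝ (⊤ : ℕ∞) (deriv v) →
        HasCompactSupport (deriv u) → HasCompactSupport (deriv v) →
        covFn μ u v = ∫ p : ℝ × ℝ, deriv u p.1 * deriv v p.2 ∂(hoeffdingMeasure μ))) ∧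
    (∀ ν : Measure (ℝ × ℝ), IsLocallyFiniteMeasure ν →
      (∀ u v : ℝ → ℝ, Differentiable ℝ u → Differentiable ℝ v →
        ContDiff ℝ (⊤ : ℕ∞) (deriv u) → ContDiff ℝ (⊤ : ℕ∞) (deriv v) →
        HasCompactSupport (deriv u) → HasCompactSupport (deriv v) →
        covFn μ u v = ∫ p : ℝ × ℝ, deriv u p.1 * deriv v p.2 ∂ν) →
      ν = hoeffdingMeasure μ) := by
  refine ⟨⟨inferInstance, representsCovariance_hoeffdingMeasure μ⟩, fun ν hν hrep => ?_⟩
  have := hν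
  exact RepresentsCovariance.unique hrep (representsCovariance_hoeffdingMeasure μ)
end
end

section
/- Let μ be a probability measure on ℝ with Höffding measure λ_μ, and let X be a random variable with law μ. If u, v : ℝ → ℝ are locally absolutely continuous with Radon–Nikodym derivatives u', v' satisfying ∫∫ |u'(x)| |u'(y)| dλ_μ(x,y) < ∞ and ∫∫ |v'(x)| |v'(y)| dλ_μ(x,y) < ∞, then u(X) and v(X) have finite second moments, the function (x,y) ↦ u'(x) v'(y) is λ_μ-integrable, and cov(u(X), v(X)) = ∫∫ u'(x) v'(y) dλ_μ(x,y). -/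
/-!
Write `J(x, y) = [min x y, max x y)`. If `u(x) = u(0) + ∫₀ˣ u'` and likewise for `v`, then
`(u x - u y)(v x - v y) = (∫_J u')(∫_J v')`, the two orientation signs cancelling, and
`μ ⊗ μ {(x, y) | s, t ∈ J(x, y)} = 2 H_μ(s, t)`. Fubini therefore turns the classical identity
`∫∫ (u x - u y)(v x - v y) dμ dμ = 2 cov(u, v)` into `2 ∫∫ u' ⊗ v' dλ_μ`. The same computation with
`U_f(x, y) = ∫_J |f'|` gives `∫∫ U_u² dμ dμ = 2 ∫∫ |u'| ⊗ |u'| dλ_μ < ∞`, which bounds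
`∫∫ (u x - u y)² dμ dμ` and so puts `u` in `L²(μ)`; and `U_u U_v ≤ U_u² + U_v²` makes
`u' ⊗ v'` integrable for `λ_μ`.
-/

open MeasureTheory ProbabilityTheory Filter Set
open scoped ENNReal NNReal

noncomputable section

lemma lintegral_mul_lt_top_of_lintegral_mul_self_lt_top {α : Type*} [MeasurableSpace α]
    {ν : Measure α} {f g : α → ℝ≥0∞} (hf : AEMeasurable f ν)
    (hf2 : ∫⁻ a, f a * f a ∂ν < ⊤) (hg2 : ∫⁻ a, g a * g a ∂ν < ⊤) :
    ∫⁻ a, f a * g a ∂ν < ⊤ := by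
  have hle (a : α) : f a * g a ≤ f a * f a + g a * g a := by
    rcases le_total (f a) (g a) with h | h
    · exact (mul_le_mul_left h _).trans le_add_self
    · exact (mul_le_mul_right h _).trans le_self_add
  calc ∫⁻ a, f a * g a ∂ν ≤ ∫⁻ a, f a * f a + g a * g a ∂ν := lintegral_mono hle
    _ = (∫⁻ a, f a * f a ∂ν) + ∫⁻ a, g a * g a ∂ν := lintegral_add_left' (hf.mul hf) _
    _ < ⊤ := ENNReal.add_lt_top.2 ⟨hf2, hg2⟩

lemma memLp_two_of_lintegral_enorm_sub_sq_lt_top {α : Type*} [MeasurableSpace α]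
    {ν : Measure α} [IsFiniteMeasure ν] [NeZero ν] {f : α → ℝ} (hf : AEStronglyMeasurable f ν)
    (h : ∫⁻ p, ‖f p.1 - f p.2‖ₑ ^ 2 ∂(ν.prod ν) < ⊤) : MemLp f 2 ν := by
  have hm : AEMeasurable (fun p : α × α => ‖f p.1 - f p.2‖ₑ ^ 2) (ν.prod ν) :=
    (hf.comp_fst.sub hf.comp_snd).enorm.pow_const 2
  rw [lintegral_prod_symm _ hm] at h
  obtain ⟨y, hy⟩ := (ae_lt_top' hm.prod_swap.lintegral_prod_right' h.ne).exists
  have hsub : MemLp (fun x => f x - f y) 2 ν := by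
    refine ⟨hf.sub aestronglyMeasurable_const, ?_⟩
    rw [eLpNorm_lt_top_iff_lintegral_rpow_enorm_lt_top two_ne_zero ENNReal.ofNat_ne_top]
    simpa using hy
  convert hsub.add (memLp_const (f y)) using 1
  ext x
  simp

section Primitive

variable {f f' : ℝ → ℝ} (hloc : LocallyIntegrable f' volume)
  (hrep : ∀ x, f x = f 0 + ∫ t in (0 : ℝ)..x, f' t)
include hloc hrep

lemma continuous_of_eq_add_intervalIntegral : Continuous f := by
  rw [funext hrep]
  exact continuous_const.add (intervalIntegral.continuous_primitive
    (fun a b => (hloc.integrableOn_isCompact isCompact_uIcc).intervalIntegrable) 0)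

lemma sub_eq_intervalIntegral_of_eq_add_intervalIntegral (x y : ℝ) :
    f x - f y = ∫ s in y..x, f' s := by
  have hint (a b : ℝ) : IntervalIntegrable f' volume a b :=
    (hloc.integrableOn_isCompact isCompact_uIcc).intervalIntegrable
  rw [hrep x, hrep y, ← intervalIntegral.integral_interval_sub_left (hint 0 x) (hint 0 y)]
  ring

end Primitive

lemma integral_sub_mul_sub_eq_two_mul_covFn (μ : Measure ℝ) [IsProbabilityMeasure μ]
    {u v : ℝ → ℝ} (hu : MemLp u 2 μ) (hv : MemLp v 2 μ) :
    ∫ p, (u p.1 - u p.2) * (v p.1 - v p.2) ∂(μ.prod μ) = 2 * covFn μ u v := by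
  have hu1 := hu.integrable one_le_two
  have hv1 := hv.integrable one_le_two
  have huv : Integrable (fun x => u x * v x) μ := hu.integrable_mul hv
  have hexpand (p : ℝ × ℝ) : (u p.1 - u p.2) * (v p.1 - v p.2)
      = (u p.1 * v p.1 + u p.2 * v p.2) - (u p.1 * v p.2 + v p.1 * u p.2) := by ring
  have hdiag : Integrable (fun p : ℝ × ℝ => u p.1 * v p.1 + u p.2 * v p.2) (μ.prod μ) :=
    (huv.comp_fst μ).add (huv.comp_snd μ)
  have hcross : Integrable (fun p : ℝ × ℝ => u p.1 * v p.2 + v p.1 * u p.2) (μ.prod μ) :=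
    (hu1.mul_prod hv1).add (hv1.mul_prod hu1)
  simp_rw [hexpand]
  rw [integral_sub hdiag hcross, integral_add (huv.comp_fst μ) (huv.comp_snd μ),
    integral_add (hu1.mul_prod hv1) (hv1.mul_prod hu1),
    integral_fun_fst (fun x => u x * v x), integral_fun_snd (fun x => u x * v x),
    integral_prod_mul u v, integral_prod_mul v u]
  simp only [probReal_univ, one_smul, covFn]
  ring

namespace Hoeffding

/-- Half-open on the right so that `μ ⊗ μ {(x, y) | s, t ∈ uIco x y} = 2 H_μ(s, t)` holds exactly,
atoms of `μ` included. -/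
def uIco (a b : ℝ) : Set ℝ := Ico (min a b) (max a b)

lemma uIco_comm (a b : ℝ) : uIco a b = uIco b a := by
  rw [uIco, uIco, min_comm, max_comm]

lemma measurableSet_uIco (a b : ℝ) : MeasurableSet (uIco a b) := measurableSet_Ico

lemma measurableSet_mem_uIco : MeasurableSet {z : (ℝ × ℝ) × ℝ | z.2 ∈ uIco z.1.1 z.1.2} :=
  (measurableSet_le (measurable_fst.fst.min measurable_fst.snd) measurable_snd).inter
    (measurableSet_lt measurable_snd (measurable_fst.fst.max measurable_fst.snd))

lemma measurableSet_mem_uIco_prod :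
    MeasurableSet {z : (ℝ × ℝ) × (ℝ × ℝ) | z.2 ∈ uIco z.1.1 z.1.2 ×ˢ uIco z.1.1 z.1.2} :=
  (measurableSet_mem_uIco.preimage (measurable_fst.prodMk measurable_snd.fst)).inter
    (measurableSet_mem_uIco.preimage (measurable_fst.prodMk measurable_snd.snd))

lemma restrict_uIoc_eq_restrict_uIco (a b : ℝ) :
    volume.restrict (uIoc a b) = volume.restrict (uIco a b) :=
  Measure.restrict_congr_set Ico_ae_eq_Ioc.symm

lemma intervalIntegral_mul_intervalIntegral_eq_uIco (f g : ℝ → ℝ) (a b : ℝ) :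
    (∫ s in a..b, f s) * (∫ s in a..b, g s) = (∫ s in uIco a b, f s) * ∫ s in uIco a b, g s := by
  simp only [intervalIntegral.intervalIntegral_eq_integral_uIoc, smul_eq_mul,
    restrict_uIoc_eq_restrict_uIco]
  split_ifs <;> ring

lemma enorm_intervalIntegral_le_setLIntegral_uIco (f : ℝ → ℝ) (a b : ℝ) :
    ‖∫ s in a..b, f s‖ₑ ≤ ∫⁻ s in uIco a b, ‖f s‖ₑ := by
  rw [← enorm_norm, intervalIntegral.norm_intervalIntegral_eq, enorm_norm,
    restrict_uIoc_eq_restrict_uIco]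
  exact enorm_integral_le_lintegral_enorm _

lemma measurable_setLIntegral_uIco (a : ℝ → ℝ≥0∞) (ha : Measurable a) :
    Measurable fun p : ℝ × ℝ => ∫⁻ s in uIco p.1 p.2, a s := by
  simp_rw [← lintegral_indicator (measurableSet_uIco _ _)]
  exact ((ha.comp measurable_snd).indicator measurableSet_mem_uIco).lintegral_prod_right'

lemma setOf_mem_uIco_prod_eq (s t : ℝ) :
    {p : ℝ × ℝ | (s, t) ∈ uIco p.1 p.2 ×ˢ uIco p.1 p.2}
      = Iic (min s t) ×ˢ Ioi (max s t) ∪ Ioi (max s t) ×ˢ Iic (min s t) := by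
  ext ⟨x, y⟩
  simp only [uIco, mem_ofPred_eq, mem_prod, mem_Ico, mem_union, mem_Iic, mem_Ioi]
  grind

variable (μ : Measure ℝ)

lemma measurable_distF : Measurable (distF μ) :=
  (Monotone.measurable fun _ _ h => measure_mono (Iic_subset_Iic.2 h)).ennreal_toReal

lemma measurable_hoeffdingKernel : Measurable fun q : ℝ × ℝ => hoeffdingKernel μ q.1 q.2 :=
  ((measurable_distF μ).comp (measurable_fst.min measurable_snd)).mul
    (measurable_const.sub ((measurable_distF μ).comp (measurable_fst.max measurable_snd)))

lemma lintegral_hoeffdingMeasure (F : ℝ × ℝ → ℝ≥0∞) (hF : Measurable F) :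
    ∫⁻ q, F q ∂hoeffdingMeasure μ = ∫⁻ q, ENNReal.ofReal (hoeffdingKernel μ q.1 q.2) * F q :=
  lintegral_withDensity_eq_lintegral_mul _ (measurable_hoeffdingKernel μ).ennreal_ofReal hF

variable [IsProbabilityMeasure μ]

lemma hoeffdingKernel_nonneg (s t : ℝ) : 0 ≤ hoeffdingKernel μ s t :=
  mul_nonneg ENNReal.toReal_nonneg (sub_nonneg.2 measureReal_le_one)

lemma integral_hoeffdingMeasure (F : ℝ × ℝ → ℝ) :
    ∫ q, F q ∂hoeffdingMeasure μ = ∫ q, hoeffdingKernel μ q.1 q.2 * F q := by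
  rw [hoeffdingMeasure, integral_withDensity_eq_integral_toReal_smul
    (measurable_hoeffdingKernel μ).ennreal_ofReal (ae_of_all _ fun _ => ENNReal.ofReal_lt_top)]
  simp only [ENNReal.toReal_ofReal (hoeffdingKernel_nonneg μ _ _), smul_eq_mul]

lemma measureReal_setOf_mem_uIco_prod (s t : ℝ) :
    (μ.prod μ).real {p : ℝ × ℝ | (s, t) ∈ uIco p.1 p.2 ×ˢ uIco p.1 p.2}
      = 2 * hoeffdingKernel μ s t := by
  have hdisj : Disjoint (Iic (min s t) ×ˢ Ioi (max s t)) (Ioi (max s t) ×ˢ Iic (min s t)) :=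
    Set.disjoint_prod.2 (Or.inl (Set.disjoint_left.2 fun x h₁ h₂ =>
      (h₂.trans_le (mem_Iic.1 h₁ |>.trans min_le_max)).false))
  rw [setOf_mem_uIco_prod_eq, measureReal_union hdisj (measurableSet_Ioi.prod measurableSet_Iic),
    measureReal_prod_prod, measureReal_prod_prod, ← compl_Iic,
    probReal_compl_eq_one_sub measurableSet_Iic, hoeffdingKernel]
  simp only [distF, measureReal_def]
  ring

lemma measure_setOf_mem_uIco_prod (s t : ℝ) :
    (μ.prod μ) {p : ℝ × ℝ | (s, t) ∈ uIco p.1 p.2 ×ˢ uIco p.1 p.2}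
      = ENNReal.ofReal (2 * hoeffdingKernel μ s t) := by
  rw [← measureReal_setOf_mem_uIco_prod, ofReal_measureReal]

lemma lintegral_setLIntegral_uIco_prod (F : ℝ × ℝ → ℝ≥0∞) (hF : Measurable F) :
    ∫⁻ p, (∫⁻ q in uIco p.1 p.2 ×ˢ uIco p.1 p.2, F q) ∂(μ.prod μ)
      = 2 * ∫⁻ q, F q ∂hoeffdingMeasure μ := by
  set S := {z : (ℝ × ℝ) × (ℝ × ℝ) | z.2 ∈ uIco z.1.1 z.1.2 ×ˢ uIco z.1.1 z.1.2}
  have hS : Measurable (S.indicator fun z => F z.2) :=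
    (hF.comp measurable_snd).indicator measurableSet_mem_uIco_prod
  calc ∫⁻ p, (∫⁻ q in uIco p.1 p.2 ×ˢ uIco p.1 p.2, F q) ∂(μ.prod μ)
      = ∫⁻ p, (∫⁻ q, S.indicator (fun z => F z.2) (p, q)) ∂(μ.prod μ) := by
        refine lintegral_congr fun p => ?_
        rw [← lintegral_indicator ((measurableSet_uIco _ _).prod (measurableSet_uIco _ _))]
        rfl
    _ = ∫⁻ q, ∫⁻ p, S.indicator (fun z => F z.2) (p, q) ∂(μ.prod μ) :=
        lintegral_lintegral_swap hS.aemeasurable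
    _ = ∫⁻ q, ENNReal.ofReal (2 * hoeffdingKernel μ q.1 q.2) * F q := by
        refine lintegral_congr fun q => ?_
        rw [mul_comm, ← measure_setOf_mem_uIco_prod]
        exact lintegral_indicator_const
          (measurableSet_mem_uIco_prod.preimage (measurable_id.prodMk measurable_const)) (F q)
    _ = 2 * ∫⁻ q, F q ∂hoeffdingMeasure μ := by
        simp only [ENNReal.ofReal_mul zero_le_two, ENNReal.ofReal_ofNat, mul_assoc]
        have hm : Measurable fun q : ℝ × ℝ => ENNReal.ofReal (hoeffdingKernel μ q.1 q.2) * F q :=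
          (measurable_hoeffdingKernel μ).ennreal_ofReal.mul hF
        rw [lintegral_const_mul _ hm, lintegral_hoeffdingMeasure μ F hF]

lemma integral_setIntegral_uIco_prod (F : ℝ × ℝ → ℝ) (hF : Measurable F)
    (hFint : Integrable F (hoeffdingMeasure μ)) :
    ∫ p, (∫ q in uIco p.1 p.2 ×ˢ uIco p.1 p.2, F q) ∂(μ.prod μ)
      = 2 * ∫ q, F q ∂hoeffdingMeasure μ := by
  set S := {z : (ℝ × ℝ) × (ℝ × ℝ) | z.2 ∈ uIco z.1.1 z.1.2 ×ˢ uIco z.1.1 z.1.2}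
  have hS : Measurable (S.indicator fun z => F z.2) :=
    (hF.comp measurable_snd).indicator measurableSet_mem_uIco_prod
  have hbox (p : ℝ × ℝ) : MeasurableSet (uIco p.1 p.2 ×ˢ uIco p.1 p.2) :=
    (measurableSet_uIco _ _).prod (measurableSet_uIco _ _)
  have hint : Integrable (S.indicator fun z => F z.2) ((μ.prod μ).prod volume) := by
    refine ⟨hS.aestronglyMeasurable, ?_⟩
    calc ∫⁻ z, ‖S.indicator (fun z => F z.2) z‖ₑ ∂((μ.prod μ).prod volume)
        = ∫⁻ p, (∫⁻ q in uIco p.1 p.2 ×ˢ uIco p.1 p.2, ‖F q‖ₑ) ∂(μ.prod μ) := by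
          rw [lintegral_prod _ hS.enorm.aemeasurable]
          refine lintegral_congr fun p => ?_
          rw [← lintegral_indicator (hbox p)]
          simp only [enorm_indicator_eq_indicator_enorm]
          rfl
      _ = 2 * ∫⁻ q, ‖F q‖ₑ ∂hoeffdingMeasure μ :=
          lintegral_setLIntegral_uIco_prod μ _ hF.enorm
      _ < ⊤ := ENNReal.mul_lt_top ENNReal.ofNat_lt_top hFint.2
  calc ∫ p, (∫ q in uIco p.1 p.2 ×ˢ uIco p.1 p.2, F q) ∂(μ.prod μ)
      = ∫ p, (∫ q, S.indicator (fun z => F z.2) (p, q)) ∂(μ.prod μ) := by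
        refine integral_congr_ae (ae_of_all _ fun p => ?_)
        dsimp only
        rw [← integral_indicator (hbox p)]
        rfl
    _ = ∫ q, ∫ p, S.indicator (fun z => F z.2) (p, q) ∂(μ.prod μ) :=
        integral_integral_swap hint
    _ = ∫ q, 2 * (hoeffdingKernel μ q.1 q.2 * F q) := by
        refine integral_congr_ae (ae_of_all _ fun q => ?_)
        dsimp only
        rw [← mul_assoc, ← measureReal_setOf_mem_uIco_prod, ← smul_eq_mul]
        exact integral_indicator_const (F q)
          (measurableSet_mem_uIco_prod.preimage (measurable_id.prodMk measurable_const))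
    _ = 2 * ∫ q, F q ∂hoeffdingMeasure μ := by
        rw [integral_const_mul, integral_hoeffdingMeasure]

lemma lintegral_uIco_mul_lintegral_uIco (a b : ℝ → ℝ≥0∞) (ha : Measurable a) (hb : Measurable b) :
    ∫⁻ p, (∫⁻ s in uIco p.1 p.2, a s) * (∫⁻ t in uIco p.1 p.2, b t) ∂(μ.prod μ)
      = 2 * ∫⁻ q, a q.1 * b q.2 ∂hoeffdingMeasure μ := by
  rw [← lintegral_setLIntegral_uIco_prod μ (fun q => a q.1 * b q.2)
    ((ha.comp measurable_fst).mul (hb.comp measurable_snd))]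
  refine lintegral_congr fun p => ?_
  rw [Measure.volume_eq_prod, ← Measure.prod_restrict,
    lintegral_prod_mul ha.aemeasurable hb.aemeasurable]

lemma integral_uIco_mul_integral_uIco (a b : ℝ → ℝ) (ha : Measurable a) (hb : Measurable b)
    (hab : Integrable (fun q : ℝ × ℝ => a q.1 * b q.2) (hoeffdingMeasure μ)) :
    ∫ p, (∫ s in uIco p.1 p.2, a s) * (∫ t in uIco p.1 p.2, b t) ∂(μ.prod μ)
      = 2 * ∫ q, a q.1 * b q.2 ∂hoeffdingMeasure μ := by
  rw [← integral_setIntegral_uIco_prod μ (fun q => a q.1 * b q.2)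
    ((ha.comp measurable_fst).mul (hb.comp measurable_snd)) hab]
  refine integral_congr_ae (ae_of_all _ fun p => ?_)
  dsimp only
  rw [Measure.volume_eq_prod, ← Measure.prod_restrict, integral_prod_mul]

lemma lintegral_setLIntegral_uIco_mul_self_lt_top {c : ℝ → ℝ} (hc : Measurable c)
    (hc2 : ∫⁻ q, ‖c q.1‖ₑ * ‖c q.2‖ₑ ∂hoeffdingMeasure μ < ⊤) :
    ∫⁻ p, (∫⁻ s in uIco p.1 p.2, ‖c s‖ₑ) * (∫⁻ t in uIco p.1 p.2, ‖c t‖ₑ) ∂(μ.prod μ) < ⊤ := by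
  rw [lintegral_uIco_mul_lintegral_uIco μ _ _ hc.enorm hc.enorm]
  exact ENNReal.mul_lt_top ENNReal.ofNat_lt_top hc2

lemma memLp_two_of_eq_add_intervalIntegral {f f' : ℝ → ℝ} (hm' : Measurable f')
    (hloc : LocallyIntegrable f' volume) (hrep : ∀ x, f x = f 0 + ∫ t in (0 : ℝ)..x, f' t)
    (hfin : ∫⁻ q, ‖f' q.1‖ₑ * ‖f' q.2‖ₑ ∂hoeffdingMeasure μ < ⊤) : MemLp f 2 μ := by
  refine memLp_two_of_lintegral_enorm_sub_sq_lt_top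
    (continuous_of_eq_add_intervalIntegral hloc hrep).aestronglyMeasurable ?_
  calc ∫⁻ p, ‖f p.1 - f p.2‖ₑ ^ 2 ∂(μ.prod μ)
      ≤ ∫⁻ p, (∫⁻ s in uIco p.1 p.2, ‖f' s‖ₑ) * (∫⁻ t in uIco p.1 p.2, ‖f' t‖ₑ) ∂(μ.prod μ) := by
        refine lintegral_mono fun p => ?_
        rw [pow_two, sub_eq_intervalIntegral_of_eq_add_intervalIntegral hloc hrep, uIco_comm]
        exact mul_le_mul' (enorm_intervalIntegral_le_setLIntegral_uIco _ _ _)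
          (enorm_intervalIntegral_le_setLIntegral_uIco _ _ _)
    _ < ⊤ := lintegral_setLIntegral_uIco_mul_self_lt_top μ hm' hfin

lemma integrable_mul_hoeffdingMeasure {a b : ℝ → ℝ} (ha : Measurable a) (hb : Measurable b)
    (ha2 : ∫⁻ q, ‖a q.1‖ₑ * ‖a q.2‖ₑ ∂hoeffdingMeasure μ < ⊤)
    (hb2 : ∫⁻ q, ‖b q.1‖ₑ * ‖b q.2‖ₑ ∂hoeffdingMeasure μ < ⊤) :
    Integrable (fun q : ℝ × ℝ => a q.1 * b q.2) (hoeffdingMeasure μ) := by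
  refine ⟨((ha.comp measurable_fst).mul (hb.comp measurable_snd)).aestronglyMeasurable, ?_⟩
  have hab := lintegral_mul_lt_top_of_lintegral_mul_self_lt_top
    (measurable_setLIntegral_uIco _ ha.enorm).aemeasurable
    (lintegral_setLIntegral_uIco_mul_self_lt_top μ ha ha2)
    (lintegral_setLIntegral_uIco_mul_self_lt_top μ hb hb2)
  rw [lintegral_uIco_mul_lintegral_uIco μ _ _ ha.enorm hb.enorm] at hab
  simp only [HasFiniteIntegral, enorm_mul]
  exact (le_mul_of_one_le_left' one_le_two).trans_lt hab

lemma covFn_eq_integral_hoeffdingMeasure {u v u' v' : ℝ → ℝ}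
    (hu'meas : Measurable u') (hv'meas : Measurable v')
    (hu'loc : LocallyIntegrable u' volume) (hv'loc : LocallyIntegrable v' volume)
    (hu : ∀ x, u x = u 0 + ∫ t in (0 : ℝ)..x, u' t) (hv : ∀ x, v x = v 0 + ∫ t in (0 : ℝ)..x, v' t)
    (hu2 : MemLp u 2 μ) (hv2 : MemLp v 2 μ)
    (hint : Integrable (fun q : ℝ × ℝ => u' q.1 * v' q.2) (hoeffdingMeasure μ)) :
    covFn μ u v = ∫ q, u' q.1 * v' q.2 ∂hoeffdingMeasure μ := by
  have h := integral_sub_mul_sub_eq_two_mul_covFn μ hu2 hv2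
  have hsplit (p : ℝ × ℝ) : (u p.1 - u p.2) * (v p.1 - v p.2)
      = (∫ s in uIco p.1 p.2, u' s) * ∫ t in uIco p.1 p.2, v' t := by
    rw [sub_eq_intervalIntegral_of_eq_add_intervalIntegral hu'loc hu,
      sub_eq_intervalIntegral_of_eq_add_intervalIntegral hv'loc hv,
      intervalIntegral_mul_intervalIntegral_eq_uIco, uIco_comm]
  rw [integral_congr_ae (ae_of_all _ hsplit),
    integral_uIco_mul_integral_uIco μ u' v' hu'meas hv'meas hint] at h
  linarith

end Hoeffding

open Hoeffding in
theorem hoeffding_covariance_representation_extended_general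
    {Ω : Type*} [MeasurableSpace Ω] (P : Measure Ω)
    (X : Ω → ℝ) (hX : Measurable X)
    (μ : Measure ℝ) [IsProbabilityMeasure μ] (hlaw : P.map X = μ)
    (u v u' v' : ℝ → ℝ)
    (hu'meas : Measurable u') (hv'meas : Measurable v')
    (hu'loc : LocallyIntegrable u' volume) (hv'loc : LocallyIntegrable v' volume)
    (hu : ∀ x : ℝ, u x = u 0 + ∫ t in (0:ℝ)..x, u' t)
    (hv : ∀ x : ℝ, v x = v 0 + ∫ t in (0:ℝ)..x, v' t)
    (hu'int : ∫⁻ p : ℝ × ℝ, ENNReal.ofReal (|u' p.1| * |u' p.2|) ∂(hoeffdingMeasure μ) < ⊤)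
    (hv'int : ∫⁻ p : ℝ × ℝ, ENNReal.ofReal (|v' p.1| * |v' p.2|) ∂(hoeffdingMeasure μ) < ⊤) :
    MemLp (fun ω => u (X ω)) 2 P ∧ MemLp (fun ω => v (X ω)) 2 P ∧
    Integrable (fun p : ℝ × ℝ => u' p.1 * v' p.2) (hoeffdingMeasure μ) ∧
    (∫ ω, u (X ω) * v (X ω) ∂P) - (∫ ω, u (X ω) ∂P) * (∫ ω, v (X ω) ∂P)
      = ∫ p : ℝ × ℝ, u' p.1 * v' p.2 ∂(hoeffdingMeasure μ) := by
  simp only [ENNReal.ofReal_mul (abs_nonneg _), ← Real.enorm_eq_ofReal_abs] at hu'int hv'int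
  have hu2 := memLp_two_of_eq_add_intervalIntegral μ hu'meas hu'loc hu hu'int
  have hv2 := memLp_two_of_eq_add_intervalIntegral μ hv'meas hv'loc hv hv'int
  have hint := integrable_mul_hoeffdingMeasure μ hu'meas hv'meas hu'int hv'int
  have hucont := continuous_of_eq_add_intervalIntegral hu'loc hu
  have hvcont := continuous_of_eq_add_intervalIntegral hv'loc hv
  have hmemLp {f : ℝ → ℝ} (hf : Continuous f) (hf2 : MemLp f 2 μ) : MemLp (fun ω => f (X ω)) 2 P :=
    (memLp_map_measure_iff hf.aestronglyMeasurable hX.aemeasurable).1 (hlaw ▸ hf2)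
  have hmap {f : ℝ → ℝ} (hf : Continuous f) : ∫ ω, f (X ω) ∂P = ∫ x, f x ∂μ := by
    rw [← hlaw, integral_map hX.aemeasurable hf.aestronglyMeasurable]
  refine ⟨hmemLp hucont hu2, hmemLp hvcont hv2, hint, ?_⟩
  rw [hmap (f := fun x => u x * v x) (hucont.mul hvcont), hmap hucont, hmap hvcont]
  exact covFn_eq_integral_hoeffdingMeasure μ hu'meas hv'meas hu'loc hv'loc hu hv hu2 hv2 hint

/-- **Theorem 1.1, extension part.** Let `μ` be a probability measure on `ℝ` with Höffding
measure `λ_μ` and let `X` be a random variable with law `μ`. If `u, v` are locally absolutely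
continuous with Radon–Nikodym derivatives `u', v'` satisfying
`∫∫ |u'(x)| |u'(y)| dλ_μ < ∞` and `∫∫ |v'(x)| |v'(y)| dλ_μ < ∞`, then `u(X)` and `v(X)` have
finite second moments, `(x,y) ↦ u'(x) v'(y)` is `λ_μ`-integrable, and
`cov(u(X), v(X)) = ∫∫ u'(x) v'(y) dλ_μ(x,y)`. -/
theorem hoeffding_covariance_representation_extended
    {Ω : Type*} [MeasurableSpace Ω] (P : Measure Ω) [IsProbabilityMeasure P]
    (X : Ω → ℝ) (hX : Measurable X)
    (μ : Measure ℝ) [IsProbabilityMeasure μ] (hlaw : P.map X = μ)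
    (u v u' v' : ℝ → ℝ)
    (hu'meas : Measurable u') (hv'meas : Measurable v')
    (hu'loc : LocallyIntegrable u' volume) (hv'loc : LocallyIntegrable v' volume)
    (hu : ∀ x : ℝ, u x = u 0 + ∫ t in (0:ℝ)..x, u' t)
    (hv : ∀ x : ℝ, v x = v 0 + ∫ t in (0:ℝ)..x, v' t)
    (hu'int : ∫⁻ p : ℝ × ℝ, ENNReal.ofReal (|u' p.1| * |u' p.2|) ∂(hoeffdingMeasure μ) < ⊤)
    (hv'int : ∫⁻ p : ℝ × ℝ, ENNReal.ofReal (|v' p.1| * |v' p.2|) ∂(hoeffdingMeasure μ) < ⊤) :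
    MemLp (fun ω => u (X ω)) 2 P ∧ MemLp (fun ω => v (X ω)) 2 P ∧
    Integrable (fun p : ℝ × ℝ => u' p.1 * v' p.2) (hoeffdingMeasure μ) ∧
    (∫ ω, u (X ω) * v (X ω) ∂P) - (∫ ω, u (X ω) ∂P) * (∫ ω, v (X ω) ∂P)
      = ∫ p : ℝ × ℝ, u' p.1 * v' p.2 ∂(hoeffdingMeasure μ) :=
  hoeffding_covariance_representation_extended_general P X hX μ hlaw u v u' v' hu'meas hv'meas
    hu'loc hv'loc hu hv hu'int hv'int
end
end

section
/- For any probability measure μ on ℝ, its Höffding kernel H_μ is positive definite: for every n and any real numbers a_1, …, a_n and points x_1, …, x_n ∈ ℝ, one has Σ_{i,j=1}^n a_i a_j H_μ(x_i, x_j) ≥ 0. -/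
open MeasureTheory ProbabilityTheory Filter Set
open scoped ENNReal NNReal

noncomputable section

/-
`H_μ (x, y)` is the covariance of the indicators of `(-∞, x]` and `(-∞, y]` under `μ`, so the
quadratic form `∑ a i a j H_μ (x i, x j)` is the variance of `∑ a i 1_{(-∞, x i]}`.
-/

section Covariance

variable {Ω ι : Type*} {mΩ : MeasurableSpace Ω} {μ : Measure Ω}

lemma covariance_indicator_one [IsProbabilityMeasure μ] {s t : Set Ω} (hs : MeasurableSet s)
    (ht : MeasurableSet t) :
    cov[s.indicator 1, t.indicator 1; μ] = μ.real (s ∩ t) - μ.real s * μ.real t := by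
  have memLp_indicator {u : Set Ω} (hu : MeasurableSet u) : MemLp (u.indicator 1) 2 μ :=
    (memLp_const (1 : ℝ)).indicator hu
  rw [covariance_eq_sub (memLp_indicator hs) (memLp_indicator ht), ← Set.inter_indicator_one,
    integral_indicator_one (hs.inter ht), integral_indicator_one hs, integral_indicator_one ht]

lemma sum_mul_mul_covariance_nonneg [IsFiniteMeasure μ] [Fintype ι] {X : ι → Ω → ℝ}
    (hX : ∀ i, MemLp (X i) 2 μ) (a : ι → ℝ) :
    0 ≤ ∑ i, ∑ j, a i * a j * cov[X i, X j; μ] := by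
  have hS : ∀ i, MemLp (a i • X i) 2 μ := fun i ↦ (hX i).const_smul (a i)
  calc 0 ≤ Var[∑ i, a i • X i; μ] := variance_nonneg _ _
    _ = cov[∑ i, a i • X i, ∑ j, a j • X j; μ] :=
      (covariance_self (memLp_finsetSum' _ fun i _ ↦ hS i).aemeasurable).symm
    _ = ∑ i, ∑ j, a i * a j * cov[X i, X j; μ] := by
      rw [covariance_sum_sum hS hS]
      refine Finset.sum_congr rfl fun i _ ↦ Finset.sum_congr rfl fun j _ ↦ ?_
      rw [covariance_smul_left, covariance_smul_right, mul_assoc]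

end Covariance

lemma hoeffdingKernel_eq_covariance (μ : Measure ℝ) [IsProbabilityMeasure μ] (x y : ℝ) :
    hoeffdingKernel μ x y = cov[(Set.Iic x).indicator 1, (Set.Iic y).indicator 1; μ] := by
  have hF : distF μ (min x y) * distF μ (max x y) = distF μ x * distF μ y := by
    rcases le_total x y with h | h
    · rw [min_eq_left h, max_eq_right h]
    · rw [min_eq_right h, max_eq_left h, mul_comm]
  rw [covariance_indicator_one measurableSet_Iic measurableSet_Iic, Set.Iic_inter_Iic,
    hoeffdingKernel, mul_one_sub, hF]
  rfl

/-- **Positive definiteness of Höffding's kernels.**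
For any probability measure `μ` on `ℝ`, its Höffding kernel `H_μ` is positive definite:
for every `n`, real numbers `a 1, …, a n` and points `x 1, …, x n ∈ ℝ`,
`Σ_{i,j} a i * a j * H_μ (x i) (x j) ≥ 0`. -/
theorem hoeffdingKernel_posDef (μ : Measure ℝ) [IsProbabilityMeasure μ]
    (n : ℕ) (a x : Fin n → ℝ) :
    0 ≤ ∑ i, ∑ j, a i * a j * hoeffdingKernel μ (x i) (x j) := by
  simp only [hoeffdingKernel_eq_covariance]
  exact sum_mul_mul_covariance_nonneg (fun i ↦ (memLp_const 1).indicator measurableSet_Iic) a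
end
end

section
/- Let μ be a probability measure on ℝ with Höffding measure λ_μ. For all non-negative measurable functions f and g on the real line, (∫∫ f(x) g(y) dλ_μ(x,y))² ≤ (∫∫ f(x) f(y) dλ_μ(x,y)) · (∫∫ g(x) g(y) dλ_μ(x,y)). -/
open MeasureTheory ProbabilityTheory Filter Set
open scoped ENNReal NNReal

noncomputable section

/-!
The Höffding kernel is a Gram kernel:
`H_μ(x, y) = (μ ⊗ μ) {q | q.1 ≤ min x y, max x y < q.2}`
`          = ∫ 1[q.1 ≤ x < q.2] 1[q.1 ≤ y < q.2] d(μ ⊗ μ)(q)`.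
By Tonelli, `∫∫ f(x) g(y) dλ_μ = ∫ Φ_f Φ_g d(μ ⊗ μ)` with `Φ_f(q) = ∫_{[q.1, q.2)} f`, so the
inequality is the Cauchy–Schwarz inequality in `L²(μ ⊗ μ)`.
-/

theorem ENNReal.lintegral_mul_sq_le {α : Type*} [MeasurableSpace α] (ν : Measure α)
    {Φ Ψ : α → ℝ≥0∞} (hΦ : AEMeasurable Φ ν) (hΨ : AEMeasurable Ψ ν) :
    (∫⁻ a, Φ a * Ψ a ∂ν) ^ 2 ≤ (∫⁻ a, Φ a ^ 2 ∂ν) * ∫⁻ a, Ψ a ^ 2 ∂ν := by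
  have holder := ENNReal.lintegral_mul_le_Lp_mul_Lq ν .two_two hΦ hΨ
  simp only [Pi.mul_apply, ENNReal.rpow_two] at holder
  have rpow_half_sq : ∀ a : ℝ≥0∞, (a ^ (1 / 2 : ℝ)) ^ 2 = a := fun a => by
    rw [← ENNReal.rpow_two, ← ENNReal.rpow_mul]; norm_num
  calc (∫⁻ a, Φ a * Ψ a ∂ν) ^ 2
      ≤ ((∫⁻ a, Φ a ^ 2 ∂ν) ^ (1 / 2 : ℝ) * (∫⁻ a, Ψ a ^ 2 ∂ν) ^ (1 / 2 : ℝ)) ^ 2 := by gcongr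
    _ = (∫⁻ a, Φ a ^ 2 ∂ν) * ∫⁻ a, Ψ a ^ 2 ∂ν := by rw [mul_pow, rpow_half_sq, rpow_half_sq]

section GramMeasure

variable {α β : Type*} [MeasurableSpace α] [MeasurableSpace β]

def gramMeasure (ρ : Measure α) (ν : Measure β) (k : β → α → ℝ≥0∞) : Measure (α × α) :=
  (ρ.prod ρ).withDensity fun p => ∫⁻ q, k q p.1 * k q p.2 ∂ν

variable {ρ : Measure α} {ν : Measure β} [SFinite ρ] [SFinite ν] {k : β → α → ℝ≥0∞}

theorem lintegral_gramMeasure (hk : Measurable (Function.uncurry k))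
    {u v : α → ℝ≥0∞} (hu : Measurable u) (hv : Measurable v) :
    ∫⁻ p, u p.1 * v p.2 ∂(gramMeasure ρ ν k)
      = ∫⁻ q, (∫⁻ x, u x * k q x ∂ρ) * ∫⁻ y, v y * k q y ∂ρ ∂ν := by
  have hkk : Measurable (Function.uncurry fun (p : α × α) q => k q p.1 * k q p.2) := by
    fun_prop
  rw [gramMeasure, lintegral_withDensity_eq_lintegral_mul _ hkk.lintegral_prod_right (by fun_prop)]
  calc ∫⁻ p, (∫⁻ q, k q p.1 * k q p.2 ∂ν) * (u p.1 * v p.2) ∂ρ.prod ρ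
      = ∫⁻ p, ∫⁻ q, u p.1 * k q p.1 * (v p.2 * k q p.2) ∂ν ∂ρ.prod ρ := by
        refine lintegral_congr fun p => ?_
        rw [← lintegral_mul_const _ hkk.of_uncurry_left]
        congr 1 with q
        ring
    _ = ∫⁻ q, ∫⁻ p, u p.1 * k q p.1 * (v p.2 * k q p.2) ∂ρ.prod ρ ∂ν :=
        lintegral_lintegral_swap (by fun_prop)
    _ = ∫⁻ q, (∫⁻ x, u x * k q x ∂ρ) * ∫⁻ y, v y * k q y ∂ρ ∂ν :=
        lintegral_congr fun q => lintegral_prod_mul (hu.mul hk.of_uncurry_left).aemeasurable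
          (hv.mul hk.of_uncurry_left).aemeasurable

theorem lintegral_gramMeasure_sq_le (hk : Measurable (Function.uncurry k))
    {u v : α → ℝ≥0∞} (hu : Measurable u) (hv : Measurable v) :
    (∫⁻ p, u p.1 * v p.2 ∂(gramMeasure ρ ν k)) ^ 2
      ≤ (∫⁻ p, u p.1 * u p.2 ∂(gramMeasure ρ ν k)) * ∫⁻ p, v p.1 * v p.2 ∂(gramMeasure ρ ν k) := by
  simp only [lintegral_gramMeasure hk hu hv, lintegral_gramMeasure hk hu hu,
    lintegral_gramMeasure hk hv hv, ← sq]
  have hmarg {w : α → ℝ≥0∞} (hw : Measurable w) : Measurable fun q => ∫⁻ x, w x * k q x ∂ρ :=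
    Measurable.lintegral_prod_right (by fun_prop)
  exact ENNReal.lintegral_mul_sq_le ν (hmarg hu).aemeasurable (hmarg hv).aemeasurable

end GramMeasure

theorem measurable_indicator_Iic_prod_Ioi :
    Measurable (Function.uncurry fun (q : ℝ × ℝ) (x : ℝ) => (Iic x ×ˢ Ioi x).indicator 1 q :
      (ℝ × ℝ) × ℝ → ℝ≥0∞) := by
  have hS : MeasurableSet ({z : (ℝ × ℝ) × ℝ | z.1.1 ≤ z.2} ∩ {z | z.2 < z.1.2}) :=
    (measurableSet_le (by fun_prop) (by fun_prop)).inter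
      (measurableSet_lt (by fun_prop) (by fun_prop))
  exact measurable_one.indicator hS

theorem ofReal_hoeffdingKernel (μ : Measure ℝ) [IsProbabilityMeasure μ] (x y : ℝ) :
    ENNReal.ofReal (hoeffdingKernel μ x y)
      = ∫⁻ q, (Iic x ×ˢ Ioi x).indicator 1 q * (Iic y ×ˢ Ioi y).indicator 1 q ∂(μ.prod μ) := by
  rw [← Pi.mul_def, ← Set.inter_indicator_one, Set.prod_inter_prod, Iic_inter_Iic,
    Ioi_inter_Ioi, lintegral_indicator_one (measurableSet_Iic.prod measurableSet_Ioi),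
    Measure.prod_prod, hoeffdingKernel, distF, distF, ← measureReal_def, ← measureReal_def,
    ← probReal_compl_eq_one_sub measurableSet_Iic, compl_Iic,
    ENNReal.ofReal_mul measureReal_nonneg, ofReal_measureReal, ofReal_measureReal]

theorem hoeffdingMeasure_eq_gramMeasure (μ : Measure ℝ) [IsProbabilityMeasure μ] :
    hoeffdingMeasure μ
      = gramMeasure volume (μ.prod μ) fun q x => (Iic x ×ˢ Ioi x).indicator 1 q := by
  simp only [hoeffdingMeasure, gramMeasure, ofReal_hoeffdingKernel, Measure.volume_eq_prod]

/-- For a probability measure `μ` on `ℝ` with Höffding measure `λ_μ` and all non-negative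
measurable functions `f`, `g` on the real line,
`(∫∫ f(x) g(y) dλ_μ)² ≤ (∫∫ f(x) f(y) dλ_μ) * (∫∫ g(x) g(y) dλ_μ)`. -/
theorem hoeffdingMeasure_cauchy (μ : Measure ℝ) [IsProbabilityMeasure μ]
    (f g : ℝ → ℝ) (hf : Measurable f) (hg : Measurable g)
    (hf0 : ∀ x, 0 ≤ f x) (hg0 : ∀ x, 0 ≤ g x) :
    (∫⁻ p : ℝ × ℝ, ENNReal.ofReal (f p.1 * g p.2) ∂(hoeffdingMeasure μ)) ^ 2
      ≤ (∫⁻ p : ℝ × ℝ, ENNReal.ofReal (f p.1 * f p.2) ∂(hoeffdingMeasure μ))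
        * ∫⁻ p : ℝ × ℝ, ENNReal.ofReal (g p.1 * g p.2) ∂(hoeffdingMeasure μ) := by
  rw [hoeffdingMeasure_eq_gramMeasure]
  simp only [ENNReal.ofReal_mul, hf0, hg0]
  exact lintegral_gramMeasure_sq_le measurable_indicator_Iic_prod_Ioi
    hf.ennreal_ofReal hg.ennreal_ofReal
end
end

section
/- Let X be a random variable with finite first absolute moment, distribution function F, and let X' be an independent copy of X. Then ∫_{−∞}^∞ F(x)(1 − F(x)) dx = ½ · E|X − X'|. -/
open MeasureTheory ProbabilityTheory Filter Set
open scoped ENNReal NNReal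

noncomputable section

/-!
`|x - y|` is the Lebesgue measure of `[min x y, max x y)`, so by Tonelli on `ℝ × Ω` the mean
`E|X - X'|` is the integral over `t` of `P(min X X' ≤ t < max X X')`. That event is the disjoint
union of `{X ≤ t < X'}` and `{X' ≤ t < X}`, each of probability `F(t)(1 - F(t))` by independence
and equal distribution.
-/

section

variable {Ω : Type*} [MeasurableSpace Ω]

lemma measurableSet_mem_Ico_min_max {f g : Ω → ℝ} (hf : Measurable f) (hg : Measurable g) :
    MeasurableSet {p : ℝ × Ω | p.1 ∈ Ico (min (f p.2) (g p.2)) (max (f p.2) (g p.2))} := by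
  have hf' : Measurable fun p : ℝ × Ω => f p.2 := hf.comp measurable_snd
  have hg' : Measurable fun p : ℝ × Ω => g p.2 := hg.comp measurable_snd
  exact (measurableSet_le (hf'.min hg') measurable_fst).inter
    (measurableSet_lt measurable_fst (hf'.max hg'))

lemma lintegral_measure_mem_Ico_min_max (μ : Measure Ω) [SFinite μ] {f g : Ω → ℝ}
    (hf : Measurable f) (hg : Measurable g) :
    ∫⁻ t, μ {ω | t ∈ Ico (min (f ω) (g ω)) (max (f ω) (g ω))}
      = ∫⁻ ω, ENNReal.ofReal |f ω - g ω| ∂μ := by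
  have hS := measurableSet_mem_Ico_min_max hf hg
  calc ∫⁻ t, μ {ω | t ∈ Ico (min (f ω) (g ω)) (max (f ω) (g ω))}
      = (volume.prod μ) {p : ℝ × Ω | p.1 ∈ Ico (min (f p.2) (g p.2)) (max (f p.2) (g p.2))} :=
        (Measure.prod_apply hS).symm
    _ = ∫⁻ ω, ENNReal.ofReal |f ω - g ω| ∂μ := by
        rw [Measure.prod_apply_symm hS]
        refine lintegral_congr fun ω => ?_
        change volume (Ico (min (f ω) (g ω)) (max (f ω) (g ω))) = _
        rw [Real.volume_Ico, max_sub_min_eq_abs']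

lemma ProbabilityTheory.IndepFun.measure_mem_Ico_min_max {P : Measure Ω} {X Y : Ω → ℝ}
    (hX : Measurable X) (hY : Measurable Y) (hXY : IndepFun X Y P) (t : ℝ) :
    P {ω | t ∈ Ico (min (X ω) (Y ω)) (max (X ω) (Y ω))}
      = P (X ⁻¹' Iic t) * P (Y ⁻¹' Ioi t) + P (Y ⁻¹' Iic t) * P (X ⁻¹' Ioi t) := by
  have hsplit : {ω | t ∈ Ico (min (X ω) (Y ω)) (max (X ω) (Y ω))}
      = (X ⁻¹' Iic t ∩ Y ⁻¹' Ioi t) ∪ (Y ⁻¹' Iic t ∩ X ⁻¹' Ioi t) := by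
    ext ω
    simp only [mem_ofPred_eq, mem_Ico, min_le_iff, lt_max_iff, mem_union, mem_inter_iff,
      mem_preimage, mem_Iic, mem_Ioi]
    grind
  have hdisj : Disjoint (X ⁻¹' Iic t ∩ Y ⁻¹' Ioi t) (Y ⁻¹' Iic t ∩ X ⁻¹' Ioi t) :=
    disjoint_left.2 fun ω h h' => (show X ω ≤ t from h.1).not_gt h'.2
  rw [hsplit, measure_union hdisj ((hY measurableSet_Iic).inter (hX measurableSet_Ioi)),
    hXY.measure_inter_preimage_eq_mul _ _ measurableSet_Iic measurableSet_Ioi,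
    hXY.symm.measure_inter_preimage_eq_mul _ _ measurableSet_Iic measurableSet_Ioi]

end

lemma ENNReal.ofReal_toReal_mul_one_sub_toReal {p : ℝ≥0∞} (hp : p ≤ 1) :
    ENNReal.ofReal (p.toReal * (1 - p.toReal)) = p * (1 - p) := by
  have hp' : p ≠ ⊤ := ne_top_of_le_ne_top ENNReal.one_ne_top hp
  rw [ENNReal.ofReal_mul ENNReal.toReal_nonneg, ENNReal.ofReal_toReal hp',
    ← ENNReal.toReal_one, ← ENNReal.toReal_sub_of_le hp ENNReal.one_ne_top,
    ENNReal.ofReal_toReal (ENNReal.sub_ne_top ENNReal.one_ne_top)]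

theorem integral_distF_mul_one_sub_distF_general
    {Ω : Type*} [MeasurableSpace Ω] (P : Measure Ω) [IsProbabilityMeasure P]
    (X X' : Ω → ℝ) (hX : Measurable X) (hX' : Measurable X')
    (hident : P.map X = P.map X') (hindep : IndepFun X X' P) :
    (∫ x : ℝ, (P (X ⁻¹' Set.Iic x)).toReal * (1 - (P (X ⁻¹' Set.Iic x)).toReal))
      = (1 / 2) * ∫ ω, |X ω - X' ω| ∂P := by
  have hX'_Iic : ∀ t, P (X' ⁻¹' Iic t) = P (X ⁻¹' Iic t) := fun t => by
    rw [← Measure.map_apply hX' measurableSet_Iic, ← hident, Measure.map_apply hX measurableSet_Iic]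
  have hIoi : ∀ {Y : Ω → ℝ}, Measurable Y → ∀ t, P (Y ⁻¹' Ioi t) = 1 - P (Y ⁻¹' Iic t) :=
    fun hY t => by rw [← compl_Iic, preimage_compl, prob_compl_eq_one_sub (hY measurableSet_Iic)]
  have hlintegral : 2 * ∫⁻ t, P (X ⁻¹' Iic t) * (1 - P (X ⁻¹' Iic t))
      = ∫⁻ ω, ENNReal.ofReal |X ω - X' ω| ∂P := by
    rw [← lintegral_measure_mem_Ico_min_max P hX hX',
      ← lintegral_const_mul' _ _ ENNReal.ofNat_ne_top]
    simp only [hindep.measure_mem_Ico_min_max hX hX', hIoi hX, hIoi hX', hX'_Iic, two_mul]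
  have hF_le : ∀ t, (P (X ⁻¹' Iic t)).toReal ≤ 1 := fun t => measureReal_le_one
  have hF_mono : Monotone fun t => (P (X ⁻¹' Iic t)).toReal := fun s t hst =>
    ENNReal.toReal_mono (measure_ne_top P _) (measure_mono (preimage_mono (Iic_subset_Iic.2 hst)))
  -- Each Bochner integral is the `toReal` of a lower integral (junk `0` when that is `∞`).
  rw [integral_eq_lintegral_of_nonneg_ae
      (ae_of_all _ fun t => mul_nonneg ENNReal.toReal_nonneg (sub_nonneg.2 (hF_le t)))
      (hF_mono.measurable.mul (measurable_const.sub hF_mono.measurable)).aestronglyMeasurable,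
    integral_eq_lintegral_of_nonneg_ae (ae_of_all _ fun _ => abs_nonneg _)
      (by fun_prop : Measurable fun ω => |X ω - X' ω|).aestronglyMeasurable, ← hlintegral]
  simp [ENNReal.ofReal_toReal_mul_one_sub_toReal prob_le_one]

/-- For a random variable `X` with finite first absolute moment, distribution function `F`,
and an independent copy `X'` of `X`, one has `∫ F(x)(1 − F(x)) dx = ½ E|X − X'|`. -/
theorem integral_distF_mul_one_sub_distF
    {Ω : Type*} [MeasurableSpace Ω] (P : Measure Ω) [IsProbabilityMeasure P]
    (X X' : Ω → ℝ) (hX : Measurable X) (hX' : Measurable X')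
    (hident : P.map X = P.map X') (hindep : IndepFun X X' P)
    (hint : Integrable X P) :
    (∫ x : ℝ, (P (X ⁻¹' Set.Iic x)).toReal * (1 - (P (X ⁻¹' Set.Iic x)).toReal))
      = (1 / 2) * ∫ ω, |X ω - X' ω| ∂P :=
  integral_distF_mul_one_sub_distF_general P X X' hX hX' hident hindep
end
end

section
/- Let m be the uniform probability measure on (0,1) and D(h) = (1/8)·(1 − 4h(1 − h)) for 0 ≤ h ≤ 1. Then for all 1-periodic C^∞ functions u, v : ℝ → ℝ, cov_m(u,v) = ∫₀¹∫₀¹ u'(x) v'(y) D(|x − y|) dx dy; moreover D ≥ 0 on [0,1], the measure ν with density 24·D(|x−y|) on (0,1) × (0,1) is a probability measure, and its marginal is the uniform distribution m on (0,1). -/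
open MeasureTheory ProbabilityTheory Filter Set
open scoped ENNReal NNReal

noncomputable section

/-- The kernel `D(h) = (1/8)(1 − 4h(1 − h))`. -/
def Dker (h : ℝ) : ℝ := (1 / 8) * (1 - 4 * h * (1 - h))

/-!
For the uniform law on `(0,1)` Hoeffding's identity reads
`cov(u,v) = ∫∫ u'(x) v'(y) min(x,y) (1 - max(x,y)) dx dy`; it follows from two integrations by
parts, the inner one computing `∫ v'(y) min(x,y) (1 - max(x,y)) dy = x ∫₀¹ v - ∫₀ˣ v`.
The kernel `D(|x - y|)` differs from `min(x,y) (1 - max(x,y))` by `a(x) + a(y) + 1/8` with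
`a(t) = (t² - t)/2`, and these terms integrate to zero against `u'(x) v'(y)` because
`∫₀¹ u' = ∫₀¹ v' = 0` for periodic `u, v`.
For the marginal, `∫₀¹ 24 D(|x - y|) dy = 1` for every `x ∈ [0,1]`.
-/

lemma Dker_eq_sq (h : ℝ) : Dker h = (1 - 2 * h) ^ 2 / 8 := by
  unfold Dker; ring

lemma Dker_nonneg (h : ℝ) : 0 ≤ Dker h := by
  rw [Dker_eq_sq]; positivity

@[fun_prop]
lemma continuous_Dker : Continuous Dker := by
  unfold Dker; fun_prop

lemma Dker_abs_sub (x y : ℝ) :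
    Dker |x - y| = min x y * (1 - max x y) + (x ^ 2 - x) / 2 + (y ^ 2 - y) / 2 + 1 / 8 := by
  rcases le_total x y with h | h
  · rw [min_eq_left h, max_eq_right h, abs_of_nonpos (sub_nonpos.2 h), Dker]; ring
  · rw [min_eq_right h, max_eq_left h, abs_of_nonneg (sub_nonneg.2 h), Dker]; ring

lemma integral_Dker (a : ℝ) : ∫ t in (0:ℝ)..a, Dker t = (1 - (1 - 2 * a) ^ 3) / 48 := by
  have hderiv : ∀ t : ℝ, HasDerivAt (fun t : ℝ => -(1 - 2 * t) ^ 3 / 48) (Dker t) t := by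
    intro t
    refine (((((hasDerivAt_id t).const_mul 2).const_sub 1).pow 3).neg.div_const 48).congr_deriv ?_
    rw [Dker_eq_sq, id]; ring
  rw [intervalIntegral.integral_eq_sub_of_hasDerivAt (fun t _ => hderiv t)
    (continuous_Dker.intervalIntegrable _ _)]
  ring

lemma integral_Dker_abs_sub {x : ℝ} (hx : x ∈ Icc (0:ℝ) 1) :
    ∫ y in (0:ℝ)..1, Dker |x - y| = 1 / 24 := by
  have hc : Continuous fun y => Dker |x - y| := by fun_prop
  have hleft : ∫ y in (0:ℝ)..x, Dker |x - y| = ∫ y in (0:ℝ)..x, Dker (x - y) := by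
    refine intervalIntegral.integral_congr fun y hy => ?_
    rw [uIcc_of_le hx.1] at hy
    simp only [abs_of_nonneg (sub_nonneg.2 hy.2)]
  have hright : ∫ y in x..1, Dker |x - y| = ∫ y in x..1, Dker (y - x) := by
    refine intervalIntegral.integral_congr fun y hy => ?_
    rw [uIcc_of_le hx.2] at hy
    simp only [abs_sub_comm x y, abs_of_nonneg (sub_nonneg.2 hy.1)]
  rw [← intervalIntegral.integral_add_adjacent_intervals (b := x) (hc.intervalIntegrable _ _)
      (hc.intervalIntegrable _ _), hleft, hright, intervalIntegral.integral_comp_sub_left Dker,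
    intervalIntegral.integral_comp_sub_right Dker, sub_self, sub_zero, integral_Dker,
    integral_Dker]
  ring

lemma lintegral_ofReal_Dker_abs_sub {x : ℝ} (hx : x ∈ Icc (0:ℝ) 1) :
    ∫⁻ y in Ioo (0:ℝ) 1, ENNReal.ofReal (24 * Dker |x - y|) = 1 := by
  have hc : Continuous fun y => 24 * Dker |x - y| := by fun_prop
  rw [← ofReal_integral_eq_lintegral_ofReal
      (hc.integrableOn_Icc.mono_set Ioo_subset_Icc_self)
      (ae_of_all _ fun y => mul_nonneg (by norm_num) (Dker_nonneg _)),
    MeasureTheory.integral_const_mul, ← integral_Ioc_eq_integral_Ioo,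
    ← intervalIntegral.integral_of_le zero_le_one, integral_Dker_abs_sub hx]
  norm_num

section IntegrationByParts

variable {u v : ℝ → ℝ}

lemma integral_deriv_eq_zero_of_periodic {T : ℝ} (hu : ContDiff ℝ 1 u)
    (hp : Function.Periodic u T) (a : ℝ) : ∫ x in a..a + T, deriv u x = 0 := by
  rw [intervalIntegral.integral_deriv_eq_sub (fun x _ => hu.differentiable one_ne_zero x)
    ((hu.continuous_deriv le_rfl).intervalIntegrable _ _), hp a, sub_self]

lemma integral_deriv_mul_sub_const (hv : ContDiff ℝ 1 v) (a b c : ℝ) :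
    ∫ y in a..b, deriv v y * (y - c) = v b * (b - c) - v a * (a - c) - ∫ y in a..b, v y := by
  have h := intervalIntegral.integral_mul_deriv_eq_deriv_mul (a := a) (b := b)
    (u := fun y => y - c) (u' := fun _ => 1) (fun y _ => (hasDerivAt_id y).sub_const c)
    (fun y _ => (hv.differentiable one_ne_zero y).hasDerivAt) intervalIntegrable_const
    ((hv.continuous_deriv le_rfl).intervalIntegrable _ _)
  simp only [one_mul] at h
  simp_rw [mul_comm (deriv v _)]
  rw [h]; ring

lemma integral_deriv_mul_min_mul_one_sub_max (hv : ContDiff ℝ 1 v) {x : ℝ}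
    (hx : x ∈ Icc (0:ℝ) 1) :
    ∫ y in (0:ℝ)..1, deriv v y * (min x y * (1 - max x y))
      = x * (∫ y in (0:ℝ)..1, v y) - ∫ y in (0:ℝ)..x, v y := by
  have hv' := hv.continuous_deriv le_rfl
  have hc : Continuous fun y => deriv v y * (min x y * (1 - max x y)) := by fun_prop
  have hleft : ∫ y in (0:ℝ)..x, deriv v y * (min x y * (1 - max x y))
      = (1 - x) * ∫ y in (0:ℝ)..x, deriv v y * (y - 0) := by
    rw [← intervalIntegral.integral_const_mul]
    refine intervalIntegral.integral_congr fun y hy => ?_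
    rw [uIcc_of_le hx.1] at hy
    simp only [min_eq_right hy.2, max_eq_left hy.2]; ring
  have hright : ∫ y in x..1, deriv v y * (min x y * (1 - max x y))
      = -x * ∫ y in x..1, deriv v y * (y - 1) := by
    rw [← intervalIntegral.integral_const_mul]
    refine intervalIntegral.integral_congr fun y hy => ?_
    rw [uIcc_of_le hx.2] at hy
    simp only [min_eq_left hy.1, max_eq_right hy.1]; ring
  rw [← intervalIntegral.integral_add_adjacent_intervals (b := x) (hc.intervalIntegrable _ _)
      (hc.intervalIntegrable _ _), hleft, hright, integral_deriv_mul_sub_const hv,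
    integral_deriv_mul_sub_const hv, ← intervalIntegral.integral_add_adjacent_intervals
      (a := 0) (b := x) (c := 1) (hv.continuous.intervalIntegrable _ _)
      (hv.continuous.intervalIntegrable _ _)]
  ring

lemma integral_deriv_mul_primitive_sub (hu : ContDiff ℝ 1 u) (hv : Continuous v) :
    ∫ x in (0:ℝ)..1, deriv u x * (x * (∫ y in (0:ℝ)..1, v y) - ∫ y in (0:ℝ)..x, v y)
      = (∫ x in (0:ℝ)..1, u x * v x) - (∫ x in (0:ℝ)..1, u x) * ∫ x in (0:ℝ)..1, v x := by
  set V := ∫ y in (0:ℝ)..1, v y with hV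
  have hW : ∀ x, HasDerivAt (fun x => x * V - ∫ y in (0:ℝ)..x, v y) (V - v x) x := fun x =>
    (((hasDerivAt_id x).mul_const V).sub
      (hv.integral_hasStrictDerivAt 0 x).hasDerivAt).congr_deriv (by rw [one_mul])
  have h := intervalIntegral.integral_mul_deriv_eq_deriv_mul (a := 0) (b := 1) (fun x _ => hW x)
    (fun x _ => (hu.differentiable one_ne_zero x).hasDerivAt)
    ((continuous_const.sub hv).intervalIntegrable _ _)
    ((hu.continuous_deriv le_rfl).intervalIntegrable _ _)
  simp_rw [mul_comm (deriv u _)]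
  rw [h, ← hV, intervalIntegral.integral_same]
  simp_rw [sub_mul, mul_comm (v _) (u _)]
  rw [intervalIntegral.integral_sub (f := fun x => V * u x) (g := fun x => u x * v x)
    ((hu.continuous.const_mul V).intervalIntegrable _ _)
    ((hu.continuous.mul hv).intervalIntegrable _ _), intervalIntegral.integral_const_mul]
  ring

lemma integral_deriv_mul_Dker_abs_sub (hv : ContDiff ℝ 1 v) (hp : Function.Periodic v 1) {x : ℝ}
    (hx : x ∈ Icc (0:ℝ) 1) :
    ∫ y in (0:ℝ)..1, deriv v y * Dker |x - y|
      = x * (∫ y in (0:ℝ)..1, v y) - (∫ y in (0:ℝ)..x, v y)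
        + ∫ y in (0:ℝ)..1, deriv v y * ((y ^ 2 - y) / 2) := by
  have hv' := hv.continuous_deriv le_rfl
  have hv0 : ∫ y in (0:ℝ)..1, deriv v y = 0 := by
    simpa using integral_deriv_eq_zero_of_periodic hv hp 0
  have hH : Continuous fun y => deriv v y * (min x y * (1 - max x y)) := by fun_prop
  have ha : Continuous fun y => deriv v y * ((y ^ 2 - y) / 2) := by fun_prop
  calc ∫ y in (0:ℝ)..1, deriv v y * Dker |x - y|
      = ∫ y in (0:ℝ)..1, (deriv v y * (min x y * (1 - max x y))
          + deriv v y * ((y ^ 2 - y) / 2) + ((x ^ 2 - x) / 2 + 1 / 8) * deriv v y) :=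
        intervalIntegral.integral_congr fun y _ => by rw [Dker_abs_sub]; ring
    _ = _ := by
        rw [intervalIntegral.integral_add
            ((hH.intervalIntegrable 0 1).add (ha.intervalIntegrable 0 1))
            ((hv'.const_mul ((x ^ 2 - x) / 2 + 1 / 8)).intervalIntegrable _ _),
          intervalIntegral.integral_add (hH.intervalIntegrable _ _) (ha.intervalIntegrable _ _),
          intervalIntegral.integral_const_mul, hv0, integral_deriv_mul_min_mul_one_sub_max hv hx]
        ring

theorem integral_mul_sub_integral_mul_integral_eq_integral_deriv_mul_Dker (hu : ContDiff ℝ 1 u)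
    (hv : ContDiff ℝ 1 v) (hup : Function.Periodic u 1) (hvp : Function.Periodic v 1) :
    (∫ x in (0:ℝ)..1, u x * v x) - (∫ x in (0:ℝ)..1, u x) * (∫ x in (0:ℝ)..1, v x)
      = ∫ x in (0:ℝ)..1, ∫ y in (0:ℝ)..1, deriv u x * deriv v y * Dker |x - y| := by
  have hu' := hu.continuous_deriv le_rfl
  have hu0 : ∫ x in (0:ℝ)..1, deriv u x = 0 := by
    simpa using integral_deriv_eq_zero_of_periodic hu hup 0
  have hW : Continuous fun x => x * (∫ y in (0:ℝ)..1, v y) - ∫ y in (0:ℝ)..x, v y :=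
    (continuous_id.mul continuous_const).sub
      (intervalIntegral.continuous_primitive (fun _ _ => hv.continuous.intervalIntegrable _ _) 0)
  have huW : Continuous fun x =>
      deriv u x * (x * (∫ y in (0:ℝ)..1, v y) - ∫ y in (0:ℝ)..x, v y) := hu'.mul hW
  set c := ∫ y in (0:ℝ)..1, deriv v y * ((y ^ 2 - y) / 2)
  calc _ = (∫ x in (0:ℝ)..1,
          deriv u x * (x * (∫ y in (0:ℝ)..1, v y) - ∫ y in (0:ℝ)..x, v y))
        + c * ∫ x in (0:ℝ)..1, deriv u x := by
        rw [integral_deriv_mul_primitive_sub hu hv.continuous, hu0, mul_zero, add_zero]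
    _ = ∫ x in (0:ℝ)..1,
          deriv u x * (x * (∫ y in (0:ℝ)..1, v y) - (∫ y in (0:ℝ)..x, v y) + c) := by
        rw [← intervalIntegral.integral_const_mul, ← intervalIntegral.integral_add
          (huW.intervalIntegrable _ _) ((hu'.const_mul c).intervalIntegrable _ _)]
        exact intervalIntegral.integral_congr fun x _ => by ring
    _ = _ := intervalIntegral.integral_congr fun x hx => by
        rw [uIcc_of_le zero_le_one] at hx
        simp_rw [mul_assoc]
        rw [intervalIntegral.integral_const_mul, integral_deriv_mul_Dker_abs_sub hv hvp hx]

end IntegrationByParts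

lemma setIntegral_Ioo_prod_Ioo_eq_intervalIntegral {E : Type*} [NormedAddCommGroup E]
    [NormedSpace ℝ E] {F : ℝ × ℝ → E} (hF : Continuous F) {a b c d : ℝ} (hab : a ≤ b)
    (hcd : c ≤ d) :
    ∫ p in Ioo a b ×ˢ Ioo c d, F p = ∫ x in a..b, ∫ y in c..d, F (x, y) := by
  have hint : IntegrableOn F (Ioo a b ×ˢ Ioo c d) (volume.prod volume) :=
    (hF.continuousOn.integrableOn_compact (isCompact_Icc.prod isCompact_Icc)).mono_set
      (prod_mono Ioo_subset_Icc_self Ioo_subset_Icc_self)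
  rw [Measure.volume_eq_prod, setIntegral_prod _ hint, intervalIntegral.integral_of_le hab,
    integral_Ioc_eq_integral_Ioo]
  simp_rw [intervalIntegral.integral_of_le hcd, integral_Ioc_eq_integral_Ioo]

lemma map_fst_withDensity_restrict_prod {α β : Type*} [MeasurableSpace α] [MeasurableSpace β]
    {μ : Measure α} {ν : Measure β} [SFinite μ] [SFinite ν] {s : Set α} {t : Set β}
    {g : α × β → ℝ≥0∞} (hg : Measurable g) (hs : MeasurableSet s)
    (hg_one : ∀ x ∈ s, ∫⁻ y in t, g (x, y) ∂ν = 1) :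
    (((μ.prod ν).restrict (s ×ˢ t)).withDensity g).map Prod.fst = μ.restrict s := by
  ext A hA
  have hset : Prod.fst ⁻¹' A ∩ s ×ˢ t = (A ∩ s) ×ˢ t := by
    ext p; simp only [mem_inter_iff, mem_preimage, mem_prod]; tauto
  rw [Measure.map_apply measurable_fst hA, withDensity_apply _ (measurable_fst hA),
    Measure.restrict_restrict (measurable_fst hA), hset, ← Measure.prod_restrict,
    lintegral_prod _ hg.aemeasurable,
    setLIntegral_congr_fun (hA.inter hs) fun x hx => hg_one x hx.2, setLIntegral_one,
    Measure.restrict_apply hA]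

/-- **Optimal periodic covariance representation for the uniform distribution.**
For the uniform probability measure `m` on `(0,1)` and all `1`-periodic `C^∞` functions
`u, v`: `cov_m(u,v) = ∫₀¹∫₀¹ u'(x) v'(y) D(|x − y|) dx dy`; moreover `D ≥ 0` on `[0,1]`,
the measure `ν` with density `24 D(|x−y|)` on `(0,1) × (0,1)` is a probability measure,
and its marginal is the uniform distribution `m`. -/
theorem uniform_periodic_covariance_representation
    (m : Measure ℝ) (hm : m = volume.restrict (Set.Ioo (0:ℝ) 1))
    (ν : Measure (ℝ × ℝ))
    (hν : ν = ((volume : Measure (ℝ × ℝ)).restrict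
        (Set.Ioo (0:ℝ) 1 ×ˢ Set.Ioo (0:ℝ) 1)).withDensity
        fun p => ENNReal.ofReal (24 * Dker |p.1 - p.2|)) :
    (∀ u v : ℝ → ℝ, ContDiff ℝ (⊤ : ℕ∞) u → ContDiff ℝ (⊤ : ℕ∞) v →
      Function.Periodic u 1 → Function.Periodic v 1 →
      covFn m u v
        = ∫ p in Set.Ioo (0:ℝ) 1 ×ˢ Set.Ioo (0:ℝ) 1,
            deriv u p.1 * deriv v p.2 * Dker |p.1 - p.2|) ∧
    (∀ h ∈ Set.Icc (0:ℝ) 1, 0 ≤ Dker h) ∧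
    IsProbabilityMeasure ν ∧
    ν.map Prod.fst = m := by
  have hmarg : ν.map Prod.fst = m := by
    rw [hν, hm, Measure.volume_eq_prod]
    exact map_fst_withDensity_restrict_prod (by fun_prop) measurableSet_Ioo
      fun x hx => lintegral_ofReal_Dker_abs_sub (Ioo_subset_Icc_self hx)
  have : IsProbabilityMeasure (ν.map Prod.fst) := by
    rw [hmarg, hm]
    exact ⟨by simp⟩
  refine ⟨fun u v hu hv hup hvp => ?_, fun h _ => Dker_nonneg h,
    Measure.isProbabilityMeasure_of_map Prod.fst, hmarg⟩
  have h1 : (1 : WithTop ℕ∞) ≤ (⊤ : ℕ∞) := by exact_mod_cast le_top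
  have hF : Continuous fun p : ℝ × ℝ => deriv u p.1 * deriv v p.2 * Dker |p.1 - p.2| := by
    have hu' := hu.continuous_deriv h1
    have hv' := hv.continuous_deriv h1
    fun_prop
  rw [setIntegral_Ioo_prod_Ioo_eq_intervalIntegral hF zero_le_one zero_le_one, covFn, hm,
    ← integral_mul_sub_integral_mul_integral_eq_integral_deriv_mul_Dker (hu.of_le h1)
      (hv.of_le h1) hup hvp]
  simp only [← integral_Ioc_eq_integral_Ioo, ← intervalIntegral.integral_of_le zero_le_one]
end
end
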